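/- arXiv:2410.18245 — 4 statements merged into one kernel-verified Lean document; each statement's English description precedes it below -/
import Mathlib

section
/- Let X, Y, Z be limit spaces and H : Z × X → Y continuous for the product convergence on Z × X, meaning: for every proper filter K on Z × X and every (z, x), if Filter.map Prod.fst K → z and Filter.map Prod.snd K → x then Filter.map H K → H(z, x). Then: (i) for every z ∈ Z the map x ↦ H(z, x) is a continuous map X → Y; (ii) the curried map Ĥ : Z → C(X,Y) defined by Ĥ(z) = H(z, ·) is continuous into the continuous convergence: for every proper filter F on Z with F → z, Filter.map Ĥ F converges continuously to Ĥ(z). -/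
open Filter

/-- A limit convergence on `X`: a convergence relation between proper filters on `X`
and points of `X` which is centered, isotone and stable. -/
structure LimitConv (X : Type*) where
  /-- the convergence relation -/
  conv : Filter X → X → Prop
  /-- constant nets converge: `pure x → x` -/
  centered : ∀ x : X, conv (pure x) x
  /-- subnets converge: if `F → x`, `G ≤ F` and `G` is proper, then `G → x` -/
  isotone : ∀ (F G : Filter X) (x : X), F.NeBot → conv F x → G ≤ F → G.NeBot → conv G x
  /-- mixings converge: if `F → x` and `G → x` then `F ⊓ G → x` -/
  stable : ∀ (F G : Filter X) (x : X), F.NeBot → G.NeBot → conv F x → conv G x →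
    conv (F ⊓ G) x

/-- `C(X,Y)`: the continuous maps between two types equipped with convergence
relations, i.e. maps sending every proper filter converging to `x` to a filter
converging to the image of `x`. -/
def ContMap {X Y : Type*} (convX : Filter X → X → Prop) (convY : Filter Y → Y → Prop) :=
  {f : X → Y // ∀ (F : Filter X) (x : X), F.NeBot → convX F x →
    convY (Filter.map f F) (f x)}

/-- The continuous convergence on `C(X,Y)`: a filter `𝓕` converges continuously
to `f` iff for every `x` and every proper filter `G → x` in `X`, the filter of
evaluations `⟨g, y⟩ ↦ g y` of `𝓕 ×ˢ G` converges to `f x` in `Y`. -/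
def ContConv {X Y : Type*} (convX : Filter X → X → Prop) (convY : Filter Y → Y → Prop)
    (𝓕 : Filter (ContMap convX convY)) (f : ContMap convX convY) : Prop :=
  ∀ (x : X) (G : Filter X), G.NeBot → convX G x →
    convY (Filter.map (fun p : ContMap convX convY × X => p.1.val p.2) (𝓕 ×ˢ G)) (f.val x)

def JointlyContinuous {Z X Y : Type*} (convZ : Filter Z → Z → Prop)
    (convX : Filter X → X → Prop) (convY : Filter Y → Y → Prop) (H : Z × X → Y) : Prop :=
  ∀ (K : Filter (Z × X)) (z : Z) (x : X), K.NeBot →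
    convZ (map Prod.fst K) z → convX (map Prod.snd K) x → convY (map H K) (H (z, x))

theorem Filter.map_eval_prod_map {Z A X Y : Type*} (e : A → X → Y) (c : Z → A)
    (F : Filter Z) (G : Filter X) :
    map (fun p : A × X => e p.1 p.2) (map c F ×ˢ G) =
      map (fun p : Z × X => e (c p.1) p.2) (F ×ˢ G) := by
  rw [← map_id (f := G), prod_map_map_eq, map_map, map_id]
  rfl

namespace JointlyContinuous

variable {Z X Y : Type*} {convZ : Filter Z → Z → Prop} {convX : Filter X → X → Prop}
  {convY : Filter Y → Y → Prop} {H : Z × X → Y}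

theorem prod (hH : JointlyContinuous convZ convX convY H) {F : Filter Z} {G : Filter X}
    {z : Z} {x : X} [F.NeBot] [G.NeBot] (hFz : convZ F z) (hGx : convX G x) :
    convY (map H (F ×ˢ G)) (H (z, x)) :=
  hH _ z x inferInstance (by rwa [map_fst_prod]) (by rwa [map_snd_prod])

/-- The image of `F` under the slice through `z` is that of `pure z ×ˢ F` under `H`. -/
theorem slice (hH : JointlyContinuous convZ convX convY H) {z : Z} (hz : convZ (pure z) z)
    (F : Filter X) (x : X) (hF : F.NeBot) (hFx : convX F x) :
    convY (map (fun x => H (z, x)) F) (H (z, x)) := by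
  simpa only [pure_prod, map_map, Function.comp_def] using hH.prod hz hFx

def curry (hH : JointlyContinuous convZ convX convY H) (hcenter : ∀ z, convZ (pure z) z) :
    Z → ContMap convX convY :=
  fun z => ⟨fun x => H (z, x), hH.slice (hcenter z)⟩

theorem continuous_curry (hH : JointlyContinuous convZ convX convY H)
    (hcenter : ∀ z, convZ (pure z) z) {F : Filter Z} {z : Z} [F.NeBot] (hFz : convZ F z) :
    ContConv convX convY (map (hH.curry hcenter) F) (hH.curry hcenter z) := by
  intro x G hG hGx
  rw [map_eval_prod_map (fun f : ContMap convX convY => f.val)]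
  exact hH.prod hFz hGx

end JointlyContinuous

/-- Currying: if `H : Z × X → Y` is continuous for the product convergence, then each
slice `H (z, ·)` is a continuous map `X → Y`, and the curried map
`Ĥ : Z → C(X,Y)`, `Ĥ z = H (z, ·)`, is continuous into the continuous convergence. -/
theorem curry_continuous {Z X Y : Type*} (LZ : LimitConv Z) (LX : LimitConv X)
    (LY : LimitConv Y) (H : Z × X → Y)
    (hH : ∀ (K : Filter (Z × X)) (z : Z) (x : X), K.NeBot →
      LZ.conv (Filter.map Prod.fst K) z → LX.conv (Filter.map Prod.snd K) x →
      LY.conv (Filter.map H K) (H (z, x))) :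
    (∀ z : Z, ∀ (F : Filter X) (x : X), F.NeBot → LX.conv F x →
      LY.conv (Filter.map (fun x : X => H (z, x)) F) (H (z, x))) ∧
    (∃ Hhat : Z → ContMap LX.conv LY.conv,
      (∀ (z : Z) (x : X), (Hhat z).val x = H (z, x)) ∧
      (∀ (F : Filter Z) (z : Z), F.NeBot → LZ.conv F z →
        ContConv LX.conv LY.conv (Filter.map Hhat F) (Hhat z))) := by
  have hH : JointlyContinuous LZ.conv LX.conv LY.conv H := hH
  exact ⟨fun z => hH.slice (LZ.centered z), hH.curry LZ.centered, fun _ _ => rfl,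
    fun _ _ _ hFz => hH.continuous_curry LZ.centered hFz⟩
end

section
/- Let X, Y, Z be limit spaces; endow C(X,Y), C(Y,Z), C(X,Z) with the continuous convergence and C(X,Y) × C(Y,Z) with the product convergence. Then the composition map (g, f) ↦ f ∘ g from C(X,Y) × C(Y,Z) to C(X,Z) is continuous: for every proper filter H on C(X,Y) × C(Y,Z), every g ∈ C(X,Y) and f ∈ C(Y,Z), if Filter.map Prod.fst H converges continuously to g and Filter.map Prod.snd H converges continuously to f, then Filter.map (fun p => p.2 ∘ p.1) H converges continuously to f ∘ g. -/
open Filter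

/-- Composition of continuous maps between convergence spaces. -/
def ContMap.comp {X Y Z : Type*} {convX : Filter X → X → Prop}
    {convY : Filter Y → Y → Prop} {convZ : Filter Z → Z → Prop}
    (g : ContMap convX convY) (f : ContMap convY convZ) : ContMap convX convZ :=
  ⟨f.val ∘ g.val, fun F x hF hconv => by
    have h₁ := g.property F x hF hconv
    have h₂ := f.property (Filter.map g.val F) (g.val x) (Filter.map_neBot) h₁
    rwa [Filter.map_map] at h₂⟩

/-- The composition map `(g, f) ↦ f ∘ g : C(X,Y) × C(Y,Z) → C(X,Z)` is continuous
for the continuous convergences and the product convergence. -/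
theorem composition_continuous {X Y Z : Type*} (LX : LimitConv X) (LY : LimitConv Y)
    (LZ : LimitConv Z) :
    ∀ (H : Filter (ContMap LX.conv LY.conv × ContMap LY.conv LZ.conv))
      (g : ContMap LX.conv LY.conv) (f : ContMap LY.conv LZ.conv), H.NeBot →
      ContConv LX.conv LY.conv (Filter.map Prod.fst H) g →
      ContConv LY.conv LZ.conv (Filter.map Prod.snd H) f →
      ContConv LX.conv LZ.conv
        (Filter.map (fun p : ContMap LX.conv LY.conv × ContMap LY.conv LZ.conv =>
          p.1.comp p.2) H) (g.comp f) := by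
  intro H g f hH hg hf x G hG hGx
  haveI := hH
  haveI := hG
  set K : Filter Y := Filter.map
    (fun p : ContMap LX.conv LY.conv × X => p.1.val p.2) ((Filter.map Prod.fst H) ×ˢ G) with hKdef
  haveI hKne : K.NeBot := Filter.map_neBot
  have hK : LY.conv K (g.val x) := hg x G hG hGx
  have hZ := hf (g.val x) K hKne hK
  set D : Filter Z := Filter.map
    (fun q : (ContMap LX.conv LY.conv × ContMap LY.conv LZ.conv) × X =>
      q.1.2.val (q.1.1.val q.2)) (H ×ˢ G) with hDdef
  haveI hDne : D.NeBot := Filter.map_neBot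
  have hle : D ≤ Filter.map (fun p : ContMap LY.conv LZ.conv × Y => p.1.val p.2)
      ((Filter.map Prod.snd H) ×ˢ K) := by
    have h1 : Filter.Tendsto
        (fun q : (ContMap LX.conv LY.conv × ContMap LY.conv LZ.conv) × X =>
          (q.1.2, q.1.1.val q.2)) (H ×ˢ G) ((Filter.map Prod.snd H) ×ˢ K) := by
      apply Filter.Tendsto.prodMk
      · exact Filter.tendsto_map.comp Filter.tendsto_fst
      · exact Filter.tendsto_map.comp
          ((Filter.tendsto_map.comp Filter.tendsto_fst).prodMk Filter.tendsto_snd)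
    exact Filter.tendsto_map.comp h1
  have hD : LZ.conv D (f.val (g.val x)) :=
    LZ.isotone _ D _ Filter.map_neBot hZ hle hDne
  have htarget : Filter.map (fun p : ContMap LX.conv LZ.conv × X => p.1.val p.2)
      ((Filter.map (fun p : ContMap LX.conv LY.conv × ContMap LY.conv LZ.conv =>
        p.1.comp p.2) H) ×ˢ G) = D := by
    conv_lhs => rw [← Filter.map_id (f := G)]
    rw [Filter.prod_map_map_eq, Filter.map_map]
    rfl
  rw [htarget]
  exact hD
end

section
/- Let I := Set.Icc (0:ℝ) 1 with its subspace topology. Suppose γ : I → ℝ satisfies: for every t ∈ I and every proper (Filter.NeBot) filter F on I with F ≤ 𝓝 t, there exists a sequence u : ℕ → ℝ with Filter.Tendsto u Filter.atTop (𝓝 (γ t)) and Filter.map γ F ≤ Filter.map u Filter.atTop. Then γ is constant. -/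
open Filter Topology

/-- A countable preconnected subset of `ℝ` is a subsingleton. -/
lemma countable_preconnected_subsingleton {S : Set ℝ} (hc : S.Countable)
    (hp : IsPreconnected S) : S.Subsingleton := by
  intro a ha b hb
  by_contra hne
  wlog hab : a < b generalizing a b
  · exact this hb ha (Ne.symm hne) (lt_of_le_of_ne (not_lt.1 hab) (Ne.symm hne))
  have hsub : Set.Icc a b ⊆ S := hp.ordConnected.out ha hb
  have : (Set.Icc a b).Countable := hc.mono hsub
  have h𝔠 : (Cardinal.mk (Set.Icc a b) : Cardinal) = Cardinal.continuum :=
    Cardinal.mk_Icc_real hab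
  have := this.le_aleph0
  rw [h𝔠] at this
  exact absurd this (not_le.2 Cardinal.aleph0_lt_continuum)

/-- A path `γ : [0,1] → ℝ` which is continuous into the pseudotopology of
subnets of convergent sequences on `ℝ` is constant. -/
theorem path_into_sequential_pseudotopology_constant (γ : (Set.Icc (0:ℝ) 1) → ℝ)
    (hγ : ∀ t : (Set.Icc (0:ℝ) 1), ∀ F : Filter (Set.Icc (0:ℝ) 1), F.NeBot → F ≤ 𝓝 t →
      ∃ u : ℕ → ℝ, Filter.Tendsto u Filter.atTop (𝓝 (γ t)) ∧
        Filter.map γ F ≤ Filter.map u Filter.atTop) :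
    ∀ s t : (Set.Icc (0:ℝ) 1), γ s = γ t := by
  -- Step 1: γ is continuous (it is sequentially continuous).
  have hcont : Continuous γ := by
    apply SeqContinuous.continuous
    intro x t hx
    obtain ⟨u, hu, hle⟩ := hγ t (Filter.map x Filter.atTop) Filter.map_neBot hx
    rw [Filter.map_map] at hle
    exact le_trans hle hu
  -- Step 2: each point has a neighborhood with countable image.
  have hloc : ∀ t : Set.Icc (0:ℝ) 1, ∃ V ∈ 𝓝 t, (γ '' V).Countable := by
    intro t
    obtain ⟨u, _, hle⟩ := hγ t (𝓝 t) (by infer_instance) le_rfl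
    refine ⟨γ ⁻¹' Set.range u, Filter.mem_map.1 (hle Filter.range_mem_map), ?_⟩
    exact (Set.countable_range u).mono (Set.image_preimage_subset _ _)
  choose V hV hVc using hloc
  -- Step 3: by compactness the whole image is countable.
  obtain ⟨s, hs⟩ := isCompact_univ.elim_nhds_subcover V (fun x _ => hV x)
  have himc : (Set.range γ).Countable := by
    have : Set.range γ ⊆ ⋃ x ∈ s, γ '' V x := by
      rintro _ ⟨y, rfl⟩
      obtain ⟨x, hx, hy⟩ := Set.mem_iUnion₂.1 (hs.2 (Set.mem_univ y))
      exact Set.mem_iUnion₂.2 ⟨x, hx, Set.mem_image_of_mem _ hy⟩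
    exact (Set.Countable.biUnion s.countable_toSet fun x _ => hVc x).mono this
  -- Step 4: the range is preconnected and countable, hence a subsingleton.
  have hpre : IsPreconnected (Set.range γ) := by
    rw [← Set.image_univ]
    exact (isPreconnected_univ).image γ hcont.continuousOn
  have hsub := countable_preconnected_subsingleton himc hpre
  intro a b
  exact hsub (Set.mem_range_self a) (Set.mem_range_self b)
end

section
/- Let K be a compact metric space, Z a type with a convergence relation conv, and H : K → Z continuous in the sense that for every t ∈ K and every proper filter F on K with F ≤ 𝓝 t, conv (Filter.map H F) (H t). Let 𝒞 be a convergence system for Z: for every z ∈ Z and every proper filter G on Z with conv G z, there exists C ∈ 𝒞 with C ∈ G. Then there exists δ > 0 such that every nonempty subset A ⊆ K with Metric.diam A < δ satisfies A ⊆ H ⁻¹' C for some C ∈ 𝒞. -/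
open Filter Topology

/-- Lebesgue number lemma for convergence systems: if `H : K → Z` is a continuous map
from a compact metric space to a convergence space and `𝒞` is a convergence system
for `Z`, then there is `δ > 0` such that every nonempty set of diameter `< δ` is
contained in the `H`-preimage of some member of `𝒞`. -/
theorem lebesgue_number_convergence_system {K : Type*} [MetricSpace K] [CompactSpace K]
    {Z : Type*} (conv : Filter Z → Z → Prop) (H : K → Z)
    (hH : ∀ (t : K) (F : Filter K), F.NeBot → F ≤ 𝓝 t → conv (Filter.map H F) (H t))
    (𝒞 : Set (Set Z))
    (h𝒞 : ∀ (z : Z) (G : Filter Z), G.NeBot → conv G z → ∃ C ∈ 𝒞, C ∈ G) :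
    ∃ δ : ℝ, 0 < δ ∧ ∀ A : Set K, A.Nonempty → Metric.diam A < δ →
      ∃ C ∈ 𝒞, A ⊆ H ⁻¹' C := by
  -- For each t, get a set C t ∈ 𝒞 whose preimage is a neighborhood of t.
  have key : ∀ t : K, ∃ C ∈ 𝒞, H ⁻¹' C ∈ 𝓝 t := by
    intro t
    have hconv := hH t (𝓝 t) inferInstance le_rfl
    obtain ⟨C, hC𝒞, hCG⟩ := h𝒞 (H t) (Filter.map H (𝓝 t)) (Filter.map_neBot) hconv
    exact ⟨C, hC𝒞, hCG⟩
  choose C hC𝒞 hCnhds using key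
  -- Open cover by interiors of the preimages.
  have hcover : Set.univ ⊆ ⋃ t : K, interior (H ⁻¹' (C t)) := by
    intro t _
    exact Set.mem_iUnion.2 ⟨t, mem_interior_iff_mem_nhds.2 (hCnhds t)⟩
  obtain ⟨δ, hδ, hball⟩ := lebesgue_number_lemma_of_metric isCompact_univ
    (fun t => isOpen_interior) hcover
  refine ⟨δ, hδ, fun A ⟨x, hxA⟩ hdiam => ?_⟩
  obtain ⟨t, ht⟩ := hball x (Set.mem_univ x)
  refine ⟨C t, hC𝒞 t, fun y hyA => ?_⟩
  have : y ∈ Metric.ball x δ :=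
    lt_of_le_of_lt (Metric.dist_le_diam_of_mem
      (isCompact_univ.isBounded.subset (Set.subset_univ A)) hyA hxA) hdiam
  exact interior_subset (ht this)
end
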